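/- For the Airy bilinear form, if the estimate ‖∫₀¹ e^{(1-t')∂ₓₓₓ⁻}∂ₓ(e^{-t'∂ₓₓₓ}u₀ · e^{-t'∂ₓₓₓ}v₀) dt'‖_{H^s} ≲ ‖u₀‖_{H^s}‖v₀‖_{H^s} holds for all Schwartz u₀, v₀, then s ≥ -1. Specifically, with û₀ = χ_{[N,N+1]} and v̂₀ = χ_{[-N-2,-N+2]}, the left side is ≳ N^{-2} for every ξ ∈ [1,2], while ‖u₀‖_{H^s}‖v₀‖_{H^s} ∼ N^{2s}. -/

import Mathlib

/-!
For `ξ ∈ [1, 2]` and `ξ₁ ∈ [N, N + 1]` the resonance `B = 3ξξ₁(ξ₁ - ξ)` is positive and at most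
`24 N²`, and `∫₀¹ e^{iBt} dt` has imaginary part `(1 - cos B) / B ≥ (1 - cos B) / (24 N²)`.
Since `B' ≥ 3N` on `[N, N + 1]`, one integration by parts gives `∫ cos B ≤ 1/2` there, so the
left-hand side is `≳ N⁻²` on `[1, 2]`, while both data have `H^s` norm `≲ N^s` when `s ≤ 0`.
Hence `N⁻² ≲ N^{2s}` for all large `N`, i.e. `s ≥ -1`.
-/

open MeasureTheory Complex Set
open scoped ENNReal

noncomputable section

def jap (x : ℝ) : ℝ := Real.sqrt (1 + x ^ 2)

/-- Fourier-side magnitude of the second Airy bilinear iterate at time 1: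
`⟨ξ⟩^s |ξ| |∫∫₀¹ e^{-3it'ξξ₁(ξ-ξ₁)} û₀(ξ₁) v̂₀(ξ-ξ₁) dt' dξ₁|`. -/
def airyIter (s : ℝ) (w z : ℝ → ℂ) (ξ : ℝ) : ℝ :=
  jap ξ ^ s * |ξ| *
    ‖∫ ξ₁ : ℝ, ∫ t' in (0:ℝ)..1,
      Complex.exp (Complex.I * ((-(3 * t' * ξ * ξ₁ * (ξ - ξ₁)) : ℝ) : ℂ)) *
        w ξ₁ * z (ξ - ξ₁)‖

open intervalIntegral Filter Topology

theorem abs_intervalIntegral_cos_le_of_deriv_ge {a b m K : ℝ} {B D D' : ℝ → ℝ} (hab : a ≤ b)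
    (hm : 0 < m) (hB : ∀ x ∈ Icc a b, HasDerivAt B (D x) x)
    (hD : ∀ x ∈ Icc a b, HasDerivAt D (D' x) x)
    (hD'c : ContinuousOn D' (Icc a b)) (hDm : ∀ x ∈ Icc a b, m ≤ D x)
    (hD'K : ∀ x ∈ Icc a b, |D' x| ≤ K) :
    |∫ x in a..b, Real.cos (B x)| ≤ 2 / m + K * (b - a) / m ^ 2 := by
  have hDpos : ∀ x ∈ Icc a b, 0 < D x := fun x hx => hm.trans_le (hDm x hx)
  have hBc : ContinuousOn B (Icc a b) := fun x hx => (hB x hx).continuousAt.continuousWithinAt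
  have hDc : ContinuousOn D (Icc a b) := fun x hx => (hD x hx).continuousAt.continuousWithinAt
  have hcos : IntervalIntegrable (fun x => Real.cos (B x)) volume a b :=
    (Real.continuous_cos.comp_continuousOn hBc).intervalIntegrable_of_Icc hab
  have hrem : IntervalIntegrable (fun x => Real.sin (B x) * D' x / D x ^ 2) volume a b :=
    (((Real.continuous_sin.comp_continuousOn hBc).mul hD'c).div (hDc.pow 2)
      fun x hx => (pow_pos (hDpos x hx) 2).ne').intervalIntegrable_of_Icc hab
  have hprim : ∀ x ∈ uIcc a b, HasDerivAt (fun x => Real.sin (B x) / D x)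
      (Real.cos (B x) - Real.sin (B x) * D' x / D x ^ 2) x := by
    intro x hx
    rw [uIcc_of_le hab] at hx
    refine (((hB x hx).sin).div (hD x hx) (hDpos x hx).ne').congr_deriv ?_
    have := (hDpos x hx).ne'
    field_simp
  have hsplit : ∫ x in a..b, Real.cos (B x) = (Real.sin (B b) / D b - Real.sin (B a) / D a) +
      ∫ x in a..b, Real.sin (B x) * D' x / D x ^ 2 := by
    have := integral_eq_sub_of_hasDerivAt hprim (hcos.sub hrem)
    rw [integral_sub hcos hrem] at this
    linarith
  have hbdry : ∀ y ∈ Icc a b, |Real.sin (B y) / D y| ≤ 1 / m := fun y hy => by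
    rw [abs_div, abs_of_pos (hDpos y hy)]
    exact div_le_div₀ zero_le_one (Real.abs_sin_le_one _) hm (hDm y hy)
  have hrem_le : |∫ x in a..b, Real.sin (B x) * D' x / D x ^ 2| ≤ K / m ^ 2 * (b - a) := by
    have := norm_integral_le_of_norm_le_const (a := a) (b := b) (C := K / m ^ 2)
      (f := fun x => Real.sin (B x) * D' x / D x ^ 2) fun x hx => by
        rw [uIoc_of_le hab] at hx
        have hx' : x ∈ Icc a b := Ioc_subset_Icc_self hx
        rw [Real.norm_eq_abs, abs_div, abs_mul, abs_of_pos (pow_pos (hDpos x hx') 2)]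
        refine div_le_div₀ ((abs_nonneg _).trans (hD'K x hx')) ?_ (pow_pos hm 2)
          (pow_le_pow_left₀ hm.le (hDm x hx') 2)
        exact (mul_le_of_le_one_left (abs_nonneg _) (Real.abs_sin_le_one _)).trans (hD'K x hx')
    rwa [Real.norm_eq_abs, abs_of_nonneg (sub_nonneg.2 hab)] at this
  rw [hsplit]
  calc _ ≤ |Real.sin (B b) / D b| + |Real.sin (B a) / D a| +
        |∫ x in a..b, Real.sin (B x) * D' x / D x ^ 2| :=
        (abs_add_le _ _).trans (add_le_add_left (abs_sub _ _) _)
    _ ≤ 1 / m + 1 / m + K / m ^ 2 * (b - a) := by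
        gcongr
        · exact hbdry b ⟨hab, le_rfl⟩
        · exact hbdry a ⟨le_rfl, hab⟩
    _ = 2 / m + K * (b - a) / m ^ 2 := by ring

theorem im_intervalIntegral_exp_I_mul (b : ℝ) (hb : b ≠ 0) :
    (∫ t in (0:ℝ)..1, exp (I * ((b * t : ℝ) : ℂ))).im = (1 - Real.cos b) / b := by
  have hlin : ∀ t : ℝ, I * ((b * t : ℝ) : ℂ) = (I * b) * t := fun t => by push_cast; ring
  simp_rw [hlin]
  rw [integral_exp_mul_complex (mul_ne_zero I_ne_zero (ofReal_ne_zero.2 hb))]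
  simp [Complex.div_im, mul_comm I, exp_mul_I, ← ofReal_cos, ← ofReal_sin]
  field_simp
  ring

theorem enorm_mul_measure_rpow_le_eLpNorm {α E F : Type*} [MeasurableSpace α] {μ : Measure α}
    [NormedAddCommGroup E] [NormedAddCommGroup F] {p : ℝ≥0∞} {s : Set α} {f : α → F} (c : E)
    (hs : MeasurableSet s) (hp : p ≠ 0) (hp_top : p ≠ ∞) (h : ∀ x ∈ s, ‖c‖ ≤ ‖f x‖) :
    ‖c‖ₑ * μ s ^ (1 / p.toReal) ≤ eLpNorm f p μ := by
  rw [← eLpNorm_indicator_const hs hp hp_top]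
  refine eLpNorm_mono fun x => ?_
  by_cases hx : x ∈ s
  · simpa [indicator_of_mem hx] using h x hx
  · simp [indicator_of_notMem hx]

theorem nonneg_of_eventually_le_mul_rpow {a K e : ℝ} (ha : 0 < a)
    (h : ∀ᶠ x in atTop, a ≤ K * x ^ e) : 0 ≤ e := by
  by_contra! he
  have hlim : Tendsto (fun x : ℝ => K * x ^ e) atTop (𝓝 0) := by
    simpa using (tendsto_rpow_neg_atTop (neg_pos.2 he)).const_mul K
  obtain ⟨x, hax, hlt⟩ := (h.and (hlim.eventually (gt_mem_nhds ha))).exists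
  linarith

theorem abs_le_jap (x : ℝ) : |x| ≤ jap x := by
  rw [jap, ← Real.sqrt_sq_eq_abs]
  exact Real.sqrt_le_sqrt (by linarith)

theorem jap_le_one_add_abs (x : ℝ) : jap x ≤ 1 + |x| := by
  rw [jap, Real.sqrt_le_left (by positivity)]
  nlinarith [sq_abs x, abs_nonneg x]

theorem jap_pos (x : ℝ) : 0 < jap x := Real.sqrt_pos.2 (by positivity)

theorem eLpNorm_jap_rpow_mul_norm_indicator_Icc_le {s c a b : ℝ} (hs : s ≤ 0) (hc : 0 < c)
    (hab : a ≤ b) (h : ∀ ξ ∈ Icc a b, c ≤ |ξ|) :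
    eLpNorm (fun ξ => jap ξ ^ s * ‖(Icc a b).indicator (1 : ℝ → ℂ) ξ‖) 2 volume ≤
      ENNReal.ofReal (c ^ s * √(b - a)) := by
  have hcs : 0 ≤ c ^ s := Real.rpow_nonneg hc.le s
  calc _ ≤ eLpNorm ((Icc a b).indicator fun _ => c ^ s) 2 volume := by
        refine eLpNorm_mono fun ξ => ?_
        by_cases hξ : ξ ∈ Icc a b
        · simp only [indicator_of_mem hξ, Pi.one_apply, norm_one, mul_one, Real.norm_eq_abs,
            abs_of_nonneg (Real.rpow_nonneg (jap_pos ξ).le s), abs_of_nonneg hcs]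
          exact Real.rpow_le_rpow_of_nonpos hc ((h ξ hξ).trans (abs_le_jap ξ)) hs
        · simp [indicator_of_notMem hξ]
    _ = ‖c ^ s‖ₑ * volume (Icc a b) ^ (1 / (2 : ℝ≥0∞).toReal) :=
        eLpNorm_indicator_const measurableSet_Icc two_ne_zero ENNReal.ofNat_ne_top
    _ = ENNReal.ofReal (c ^ s * √(b - a)) := by
        rw [Real.volume_Icc, Real.enorm_of_nonneg hcs, ENNReal.ofReal_mul hcs, Real.sqrt_eq_rpow,
          ENNReal.ofReal_rpow_of_nonneg (sub_nonneg.2 hab) (by norm_num)]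
        norm_num

theorem intervalIntegral_cos_resonance_le {N ξ : ℝ} (hN : 4 ≤ N) (hξ : ξ ∈ Icc (1:ℝ) 2) :
    ∫ x in N..N+1, Real.cos (3 * ξ * x * (x - ξ)) ≤ 1 / 2 := by
  obtain ⟨hξ1, hξ2⟩ := hξ
  have hphase : ∀ x ∈ Icc N (N+1), HasDerivAt (fun x => 3 * ξ * x * (x - ξ))
      (6 * ξ * x - 3 * ξ ^ 2) x := fun x _ => by
    refine (((hasDerivAt_id x).const_mul (3 * ξ)).mul
      ((hasDerivAt_id x).sub_const ξ)).congr_deriv ?_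
    simp only [id]; ring
  have hfreq : ∀ x ∈ Icc N (N+1), HasDerivAt (fun x => 6 * ξ * x - 3 * ξ ^ 2) (6 * ξ) x :=
    fun x _ => by simpa using ((hasDerivAt_id x).const_mul (6 * ξ)).sub_const (3 * ξ ^ 2)
  have hvdc := abs_intervalIntegral_cos_le_of_deriv_ge (K := 12) (m := 3 * N) (by linarith)
    (by linarith) hphase hfreq continuousOn_const
    (fun x hx => by nlinarith [hx.1]) (fun x _ => by rw [abs_of_pos (by linarith)]; linarith)
  have hN2 : 2 / (3 * N) + 12 * (N + 1 - N) / (3 * N) ^ 2 ≤ 1 / 2 := by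
    rw [div_add_div _ _ (by positivity) (by positivity), div_le_div_iff₀ (by positivity) two_pos]
    nlinarith
  exact (le_abs_self _).trans (hvdc.trans hN2)

theorem le_norm_integral_airy_indicator {N ξ : ℝ} (hN : 4 ≤ N) (hξ : ξ ∈ Icc (1:ℝ) 2) :
    1 / (48 * N ^ 2) ≤ ‖∫ ξ₁ : ℝ, ∫ t' in (0:ℝ)..1,
      exp (I * ((-(3 * t' * ξ * ξ₁ * (ξ - ξ₁)) : ℝ) : ℂ)) *
        (Icc N (N+1)).indicator 1 ξ₁ * (Icc (-N-2) (-N+2)).indicator 1 (ξ - ξ₁)‖ := by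
  obtain ⟨hξ1, hξ2⟩ := hξ
  set B : ℝ → ℝ := fun x => 3 * ξ * x * (x - ξ) with hB
  set G : ℝ → ℂ := fun x => ∫ t in (0:ℝ)..1, exp (I * ((B x * t : ℝ) : ℂ)) with hG
  have hGc : Continuous G := by fun_prop
  have hBpos : ∀ x ∈ Icc N (N+1), 0 < B x := fun x hx =>
    mul_pos (mul_pos (by linarith) (by linarith [hx.1])) (by linarith [hx.1])
  have hBle : ∀ x ∈ Icc N (N+1), B x ≤ 24 * N ^ 2 := fun x hx => by
    have : x * (x - ξ) ≤ (N + 1) * N :=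
      mul_le_mul hx.2 (by linarith [hx.2]) (by linarith [hx.1]) (by linarith)
    simp only [hB]; nlinarith
  have hsupp : (fun ξ₁ => ∫ t' in (0:ℝ)..1,
      exp (I * ((-(3 * t' * ξ * ξ₁ * (ξ - ξ₁)) : ℝ) : ℂ)) *
        (Icc N (N+1)).indicator 1 ξ₁ * (Icc (-N-2) (-N+2)).indicator 1 (ξ - ξ₁)) =
      (Icc N (N+1)).indicator G := by
    ext x
    by_cases hx : x ∈ Icc N (N+1)
    · have hz : ξ - x ∈ Icc (-N-2) (-N+2) := ⟨by linarith [hx.2], by linarith [hx.1]⟩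
      simp only [indicator_of_mem hx, indicator_of_mem hz, Pi.one_apply, mul_one, hG, hB]
      congr 1; ext t; congr 3; ring
    · simp [indicator_of_notMem hx]
  have hcos := intervalIntegral_cos_resonance_le hN ⟨hξ1, hξ2⟩
  have hcos_int : IntervalIntegrable (fun x => Real.cos (B x)) volume N (N+1) :=
    (by fun_prop : Continuous fun x => Real.cos (B x)).intervalIntegrable _ _
  calc 1 / (48 * N ^ 2) ≤ (1 - ∫ x in N..N+1, Real.cos (B x)) / (24 * N ^ 2) := by
        rw [div_le_div_iff₀ (by positivity) (by positivity)]; nlinarith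
    _ = ∫ x in N..N+1, (1 - Real.cos (B x)) / (24 * N ^ 2) := by
        rw [intervalIntegral.integral_div, integral_sub intervalIntegrable_const hcos_int]; simp
    _ ≤ ∫ x in N..N+1, (G x).im := by
        refine integral_mono_on (by linarith) ((intervalIntegrable_const.sub hcos_int).div_const _)
          ((continuous_im.comp hGc).intervalIntegrable _ _) fun x hx => ?_
        rw [hG, im_intervalIntegral_exp_I_mul _ (hBpos x hx).ne']
        exact div_le_div_of_nonneg_left (sub_nonneg.2 (Real.cos_le_one _)) (hBpos x hx)
          (hBle x hx)
    _ = (∫ x in N..N+1, G x).im := imCLM.intervalIntegral_comp_comm (hGc.intervalIntegrable _ _)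
    _ ≤ ‖∫ x in N..N+1, G x‖ := (le_abs_self _).trans (abs_im_le_norm _)
    _ = _ := by
        rw [hsupp, MeasureTheory.integral_indicator measurableSet_Icc,
          integral_Icc_eq_integral_Ioc, integral_of_le (by linarith)]

theorem le_eLpNorm_airyIter_indicator {s N : ℝ} (hs : s ≤ 0) (hN : 4 ≤ N) :
    ENNReal.ofReal (3 ^ s / (48 * N ^ 2)) ≤
      eLpNorm (airyIter s ((Icc N (N+1)).indicator 1) ((Icc (-N-2) (-N+2)).indicator 1)) 2
        volume := by
  have hc : 0 ≤ 3 ^ s / (48 * N ^ 2) := by positivity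
  have := enorm_mul_measure_rpow_le_eLpNorm (μ := volume) (3 ^ s / (48 * N ^ 2))
    (f := airyIter s ((Icc N (N+1)).indicator 1) ((Icc (-N-2) (-N+2)).indicator 1))
    measurableSet_Icc two_ne_zero ENNReal.ofNat_ne_top fun ξ (hξ : ξ ∈ Icc (1:ℝ) 2) => by
      have hjap : 3 ^ s ≤ jap ξ ^ s := Real.rpow_le_rpow_of_nonpos (jap_pos ξ)
        ((jap_le_one_add_abs ξ).trans (by rw [abs_of_pos (by linarith [hξ.1])]; linarith [hξ.2]))
        hs
      have hξ1 : 1 ≤ |ξ| := by rw [abs_of_pos (by linarith [hξ.1])]; exact hξ.1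
      have hjap0 : 0 ≤ jap ξ ^ s := Real.rpow_nonneg (jap_pos ξ).le s
      have hweight : 0 ≤ jap ξ ^ s * |ξ| := mul_nonneg hjap0 (abs_nonneg ξ)
      rw [Real.norm_of_nonneg hc, airyIter, Real.norm_of_nonneg (by positivity)]
      calc 3 ^ s / (48 * N ^ 2) = 3 ^ s * 1 * (1 / (48 * N ^ 2)) := by ring
        _ ≤ _ := mul_le_mul (mul_le_mul hjap hξ1 zero_le_one hjap0)
            (le_norm_integral_airy_indicator hN hξ) (by positivity) hweight
  norm_num [Real.volume_Icc, Real.enorm_of_nonneg hc] at this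
  exact this

/-- Necessity: if `‖∫₀¹ K(1-t')∂ₓ(K(t')u₀ K(t')v₀) dt'‖_{H^s} ≲ ‖u₀‖_{H^s}‖v₀‖_{H^s}`
(Fourier-side formulation, quantifying over Fourier data `w, z`), then `s ≥ -1`. -/
theorem airy_bilinear_necessity (s : ℝ)
    (h : ∃ C : ℝ, 0 < C ∧ ∀ w z : ℝ → ℂ,
      eLpNorm (fun ξ : ℝ => airyIter s w z ξ) 2 volume ≤
        ENNReal.ofReal C *
          eLpNorm (fun ξ : ℝ => jap ξ ^ s * ‖w ξ‖) 2 volume *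
          eLpNorm (fun ξ : ℝ => jap ξ ^ s * ‖z ξ‖) 2 volume) :
    -1 ≤ s := by
  obtain ⟨C, hC, hbound⟩ := h
  by_contra! hs
  have hs0 : s ≤ 0 := by linarith
  have key : ∀ᶠ R in atTop, 3 ^ s / 192 ≤ 2 * C * R ^ (2 + 2 * s) := by
    filter_upwards [eventually_ge_atTop 2] with R hR
    have hu := eLpNorm_jap_rpow_mul_norm_indicator_Icc_le hs0 (by linarith : 0 < R)
      (by linarith : 2 * R ≤ 2 * R + 1) fun ξ hξ => by
        rw [abs_of_pos (by linarith [hξ.1])]; linarith [hξ.1]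
    have hv := eLpNorm_jap_rpow_mul_norm_indicator_Icc_le hs0 (by linarith : 0 < R)
      (by linarith : -(2 * R) - 2 ≤ -(2 * R) + 2) fun ξ hξ => by
        rw [abs_of_neg (by linarith [hξ.2])]; linarith [hξ.2]
    have := (le_eLpNorm_airyIter_indicator hs0 (by linarith : 4 ≤ 2 * R)).trans
      ((hbound _ _).trans (mul_le_mul' (mul_le_mul' le_rfl hu) hv))
    rw [← ENNReal.ofReal_mul hC.le, ← ENNReal.ofReal_mul (by positivity),
      ENNReal.ofReal_le_ofReal_iff (by positivity), show 2 * R + 1 - 2 * R = 1 by ring,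
      show -(2 * R) + 2 - (-(2 * R) - 2) = 2 ^ 2 by ring, Real.sqrt_one,
      Real.sqrt_sq zero_le_two] at this
    rw [div_le_iff₀ (by positivity)] at this
    rw [show 2 + 2 * s = 2 + (s + s) by ring, Real.rpow_add (by linarith),
      Real.rpow_add (by linarith), Real.rpow_two]
    linarith
  linarith [nonneg_of_eventually_le_mul_rpow (by positivity) key]
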